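/- For any instance with exactly 2 agents whose true valuations are additive, and any bid profile (b_1, b_2) in which agent i's bid b_i is a best response to the other agent's bid, the allocation produced by Standard-E-C-E on (b_1, b_2) is EF1 from agent i's perspective with respect to agent i's true valuation. -/

import Mathlib

/-!
Formalization of the strategic Envy-Cycle-Elimination (E-C-E) setting.

There are `n` agents and `m` goods (`Fin m`), with the predefined ordering of agents
and goods given by the orders on `Fin n` and `Fin m`.  A bid consists of a reported
additive valuation (a nonnegative value for every good) together with a preference
list (a permutation of the goods).  E-C-E starts from empty bundles and, while
unallocated goods remain, selects a source of the envy graph (according to the rule of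
the respective variant), adds one unallocated good to that agent's bundle (again
according to the rule of the respective variant), and then repeatedly eliminates envy
cycles, in a fixed order, until the envy graph has a source.
-/

open scoped Classical
open Finset

/-- A bid of an agent: a reported additive valuation (a nonnegative value for every
good) together with a preference list, a permutation of the goods. -/
structure Bid (m : ℕ) where
  val : Fin m → ℝ
  nonneg : ∀ g, 0 ≤ val g
  pref : Equiv.Perm (Fin m)

namespace ECE

variable {n m : ℕ}

/-- Reported (additive) value of a bundle. -/
noncomputable def bval (b : Bid m) (S : Finset (Fin m)) : ℝ := ∑ g ∈ S, b.val g

/-- (True, additive) value of a bundle under the valuation `v`. -/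
noncomputable def value (v : Fin m → ℝ) (S : Finset (Fin m)) : ℝ := ∑ g ∈ S, v g

/-- Envy-graph edge: agent `i` envies agent `j` (w.r.t. the reported valuations) under
the partial allocation `P`. -/
def envies (b : Fin n → Bid m) (P : Fin n → Finset (Fin m)) (i j : Fin n) : Prop :=
  bval (b i) (P i) < bval (b i) (P j)

/-- The sources (vertices of in-degree 0) of the envy graph. -/
noncomputable def sources (b : Fin n → Bid m) (P : Fin n → Finset (Fin m)) :
    Finset (Fin n) :=
  univ.filter fun i => ∀ j, ¬ envies b P j i

/-- The envy cycles of the current envy graph, represented as cyclic permutations `σ`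
of the agents such that every agent moved by `σ` envies her image under `σ`. -/
noncomputable def cycleSet (b : Fin n → Bid m) (P : Fin n → Finset (Fin m)) :
    Finset (Equiv.Perm (Fin n)) :=
  univ.filter fun σ => σ.IsCycle ∧ ∀ i, σ i ≠ i → envies b P i (σ i)

/-- A fixed enumeration of the permutations of the agents, providing the fixed
(lexicographic) order in which envy cycles are eliminated. -/
noncomputable def permIdx (n : ℕ) :
    Equiv.Perm (Fin n) ≃ Fin (Fintype.card (Equiv.Perm (Fin n))) :=
  Fintype.equivFin _

/-- Eliminate one envy cycle (the first one in the fixed order): every agent on the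
cycle receives the bundle of the agent she envies. -/
noncomputable def elimOnce (b : Fin n → Bid m) (P : Fin n → Finset (Fin m)) :
    Fin n → Finset (Fin m) :=
  if h : (cycleSet b P).Nonempty then
    let σ := (permIdx n).symm (((cycleSet b P).image (permIdx n)).min' (h.image _))
    fun i => P (σ i)
  else P

/-- Repeatedly eliminate envy cycles until the envy graph has a source. -/
noncomputable def resolve (b : Fin n → Bid m) :
    ℕ → (Fin n → Finset (Fin m)) → Fin n → Finset (Fin m)
  | 0, P => P
  | fuel + 1, P => if (sources b P).Nonempty then P else resolve b fuel (elimOnce b P)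

/-- The state (current partial allocation, remaining unallocated goods) of an E-C-E
run after a given number of steps.  In each step, if unallocated goods remain, the
agent chosen by `pickAgent` (a source of the envy graph) receives the good chosen by
`pickItem`, and afterwards envy cycles are eliminated until the graph has a source. -/
noncomputable def stateECE (b : Fin n → Bid m)
    (pickAgent : (Fin n → Finset (Fin m)) → Option (Fin n))
    (pickItem : Fin n → (R : Finset (Fin m)) → R.Nonempty → Fin m) :
    ℕ → (Fin n → Finset (Fin m)) × Finset (Fin m)
  | 0 => (fun _ => ∅, univ)
  | k + 1 =>
    let s := stateECE b pickAgent pickItem k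
    if hR : s.2.Nonempty then
      match pickAgent s.1 with
      | none => s
      | some i =>
        let g := pickItem i s.2 hR
        (resolve b (n * n + 1) (fun j => if j = i then insert g (s.1 j) else s.1 j),
          s.2.erase g)
    else s

/-- Source selection of Standard-E-C-E: among multiple sources, the agent earliest in
the predefined ordering of the agents. -/
noncomputable def stdAgent (b : Fin n → Bid m) (P : Fin n → Finset (Fin m)) :
    Option (Fin n) :=
  if h : (sources b P).Nonempty then some ((sources b P).min' h) else none

/-- Source selection of the Priority variants: among multiple sources, those having at
least one outgoing envy edge have priority, ties broken by the predefined ordering of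
the agents. -/
noncomputable def priAgent (b : Fin n → Bid m) (P : Fin n → Finset (Fin m)) :
    Option (Fin n) :=
  if h' : ((sources b P).filter fun i => ∃ j, envies b P i j).Nonempty then
    some (((sources b P).filter fun i => ∃ j, envies b P i j).min' h')
  else if h : (sources b P).Nonempty then some ((sources b P).min' h) else none

/-- The unallocated good of highest reported value, ties broken by the predefined
ordering of the goods. -/
noncomputable def bestItem (v : Fin m → ℝ) (R : Finset (Fin m)) (hR : R.Nonempty) :
    Fin m :=
  (R.filter fun g => ∀ g' ∈ R, v g' ≤ v g).min' (by
    obtain ⟨g, hg, hmax⟩ := R.exists_max_image v hR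
    exact ⟨g, mem_filter.2 ⟨hg, hmax⟩⟩)

/-- The earliest unallocated good in the preference list `pref`. -/
noncomputable def preferredItem (pref : Equiv.Perm (Fin m)) (R : Finset (Fin m))
    (hR : R.Nonempty) : Fin m :=
  pref.symm ((R.image pref).min' (hR.image _))

/-- Standard-E-C-E: sources chosen by the predefined agent ordering, goods assigned in
the predefined ordering of the goods. -/
noncomputable def Standard (b : Fin n → Bid m) : Fin n → Finset (Fin m) :=
  (stateECE b (stdAgent b) (fun _ R hR => R.min' hR) m).1

/-- Priority-E-C-E: envious sources have priority (ties broken by the agent ordering),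
goods assigned in the predefined ordering of the goods. -/
noncomputable def Priority (b : Fin n → Bid m) : Fin n → Finset (Fin m) :=
  (stateECE b (priAgent b) (fun _ R hR => R.min' hR) m).1

/-- Best-Item-E-C-E: envious sources have priority, and the chosen agent receives her
unallocated good of highest reported value (ties broken by the good ordering). -/
noncomputable def BestItemECE (b : Fin n → Bid m) : Fin n → Finset (Fin m) :=
  (stateECE b (priAgent b) (fun i R hR => bestItem (b i).val R hR) m).1

/-- Preferred-Item-E-C-E: envious sources have priority, and the chosen agent receives
the earliest unallocated good in her preference list. -/
noncomputable def PreferredItemECE (b : Fin n → Bid m) : Fin n → Finset (Fin m) :=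
  (stateECE b (priAgent b) (fun i R hR => preferredItem (b i).pref R hR) m).1

/-- The allocation `A` is `α`-EF1 from agent `i`'s perspective w.r.t. the valuation
`v`: for every agent `j` with nonempty bundle there is a good `g ∈ A j` with
`v (A i) ≥ α · v (A j \ {g})`. -/
def EF1From (α : ℝ) (v : Fin m → ℝ) (A : Fin n → Finset (Fin m)) (i : Fin n) : Prop :=
  ∀ j : Fin n, (A j).Nonempty → ∃ g ∈ A j, α * value v ((A j).erase g) ≤ value v (A i)

/-- The allocation `A` is EF1 w.r.t. the valuations `v`. -/
def IsEF1 (v : Fin n → Fin m → ℝ) (A : Fin n → Finset (Fin m)) : Prop :=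
  ∀ i : Fin n, EF1From 1 (v i) A i

/-- Agent `i`'s bid in the profile `b` is a best response to the others' bids, w.r.t.
her true (additive) valuation `v`: no alternative bid gives her a bundle of strictly
larger true value. -/
def BestResponse (Mech : (Fin n → Bid m) → Fin n → Finset (Fin m))
    (v : Fin m → ℝ) (b : Fin n → Bid m) (i : Fin n) : Prop :=
  ∀ b' : Bid m, value v (Mech (Function.update b i b') i) ≤ value v (Mech b i)

/-- The bid profile `b` is a pure Nash equilibrium of the mechanism `Mech` w.r.t. the
true (additive) valuations `v`. -/
def IsPNE (Mech : (Fin n → Bid m) → Fin n → Finset (Fin m))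
    (v : Fin n → Fin m → ℝ) (b : Fin n → Bid m) : Prop :=
  ∀ i : Fin n, BestResponse Mech (v i) b i

end ECE

open ECE

/-!
With two agents, Standard-E-C-E allocates the goods in order: each good goes to the agent whom
the other does not envy (agent `0` if neither is envied), and the bundles are swapped if the
envy becomes mutual.

Agent `i` can deviate by boosting, in her reported valuation, the good `γ` allocated at step
`t` above all other goods together. Nothing changes before step `t`; afterwards `i` never gives
up a bundle containing `γ` and envies whoever holds `γ`, so she receives every later good until
a swap hands her that bundle. Hence, if `i` receives `γ` in the truthful run, she can secure her
step-`t` bundle plus `γ`; if the other agent receives it, forming the bundle `D`, she secures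
either `D` or the complement of `D`, which the other agent then does not prefer to `D`. A best
response values each of these bundles at most `W`, the value of `i`'s final bundle.

If EF1 failed towards the other agent's final bundle `Y`, every bundle of value at most `W`
would miss goods of `Y` of positive value even after removing any single good. Induction over
the steps, using the bounds above, shows that `i`'s bundle is worth at most `W` throughout, and
that the other agent's bundle, whenever contained in `Y`, misses such goods: absurd at the end,
where it is `Y`.
-/

lemma Fin.two_add_one_ne (i : Fin 2) : i + 1 ≠ i := by revert i; decide

lemma Fin.two_add_one_add_one (i : Fin 2) : i + 1 + 1 = i := by revert i; decide

lemma Fin.two_eq_or_eq_add_one (i a : Fin 2) : a = i ∨ a = i + 1 := by revert i a; decide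

lemma Fin.two_union_add_one {α : Type*} [DecidableEq α] (P : Fin 2 → Finset α) (i : Fin 2) :
    P i ∪ P (i + 1) = P 0 ∪ P 1 := by
  fin_cases i
  · rfl
  · exact union_comm _ _

lemma Equiv.Perm.fin_two_eq_one_or_swap (σ : Equiv.Perm (Fin 2)) :
    σ = 1 ∨ σ = Equiv.swap 0 1 := by
  revert σ; decide

namespace ECE

variable {m : ℕ}

lemma bval_nonneg (β : Bid m) (S : Finset (Fin m)) : 0 ≤ bval β S :=
  sum_nonneg fun g _ => β.nonneg g

lemma bval_mono (β : Bid m) {S T : Finset (Fin m)} (h : S ⊆ T) : bval β S ≤ bval β T :=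
  sum_le_sum_of_subset_of_nonneg h fun g _ _ => β.nonneg g

lemma value_nonneg {v : Fin m → ℝ} (hv : ∀ g, 0 ≤ v g) (S : Finset (Fin m)) :
    0 ≤ value v S :=
  sum_nonneg fun g _ => hv g

lemma value_mono {v : Fin m → ℝ} (hv : ∀ g, 0 ≤ v g) {S T : Finset (Fin m)} (h : S ⊆ T) :
    value v S ≤ value v T :=
  sum_le_sum_of_subset_of_nonneg h fun g _ _ => hv g

lemma value_compl_eq_add (v : Fin m → ℝ) {D Y : Finset (Fin m)} (h : D ⊆ Y) :
    value v (univ \ D) = value v (univ \ Y) + value v (Y \ D) := by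
  unfold value
  linarith [sum_sdiff (f := v) h, sum_sdiff (f := v) (subset_univ D),
    sum_sdiff (f := v) (subset_univ Y)]

lemma bval_le_bval_compl (β : Bid m) {S T : Finset (Fin m)} (h : Disjoint S T) :
    bval β S ≤ bval β (univ \ T) :=
  bval_mono β (subset_sdiff.2 ⟨subset_univ S, h⟩)

lemma value_erase_sdiff_pos {v : Fin m → ℝ} (hv : ∀ g, 0 ≤ v g) {W : ℝ}
    {Y D : Finset (Fin m)} (hY : ∀ g, W < value v (Y.erase g)) (hD : value v D ≤ W) (g : Fin m) :
    0 < value v ((Y \ D).erase g) := by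
  have hcover : Y.erase g ⊆ D ∪ (Y \ D).erase g := by
    intro x hx
    by_cases hxD : x ∈ D <;> simp_all
  have hsplit : value v (D ∪ (Y \ D).erase g) = value v D + value v ((Y \ D).erase g) :=
    sum_union (disjoint_sdiff.mono_right (erase_subset _ _))
  linarith [hY g, value_mono hv hcover]

section TwoAgents

variable (c : Fin 2 → Bid m)

def MutualEnvy (P : Fin 2 → Finset (Fin m)) : Prop :=
  envies c P 0 1 ∧ envies c P 1 0

noncomputable def receiver (P : Fin 2 → Finset (Fin m)) : Fin 2 :=
  if envies c P 1 0 then 1 else 0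

noncomputable def give (P : Fin 2 → Finset (Fin m)) (g : Fin m) : Fin 2 → Finset (Fin m) :=
  Function.update P (receiver c P) (insert g (P (receiver c P)))

noncomputable def swapIfMutual (Q : Fin 2 → Finset (Fin m)) : Fin 2 → Finset (Fin m) :=
  if MutualEnvy c Q then fun a => Q (a + 1) else Q

noncomputable def step (P : Fin 2 → Finset (Fin m)) (g : Fin m) : Fin 2 → Finset (Fin m) :=
  swapIfMutual c (give c P g)

noncomputable def run : ℕ → Fin 2 → Finset (Fin m)
  | 0 => fun _ => ∅
  | s + 1 => if h : s < m then step c (run s) ⟨s, h⟩ else run s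

variable {c}

lemma mutualEnvy_iff {P : Fin 2 → Finset (Fin m)} (i : Fin 2) :
    MutualEnvy c P ↔ envies c P i (i + 1) ∧ envies c P (i + 1) i := by
  fin_cases i
  · rfl
  · exact and_comm

lemma not_envies_self (P : Fin 2 → Finset (Fin m)) (a : Fin 2) : ¬ envies c P a a :=
  lt_irrefl _

lemma receiver_eq_of_envies {P : Fin 2 → Finset (Fin m)} {i : Fin 2} (hP : ¬ MutualEnvy c P)
    (h : envies c P i (i + 1)) : receiver c P = i := by
  fin_cases i
  · exact if_neg fun h' => hP ⟨h, h'⟩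
  · exact if_pos h

lemma give_subset (P : Fin 2 → Finset (Fin m)) (g : Fin m) (a : Fin 2) :
    give c P g a ⊆ insert g (P a) := by
  unfold give
  rw [Function.update_apply]
  split_ifs with h
  · rw [h]
  · exact subset_insert _ _

lemma step_congr {c c' : Fin 2 → Bid m} {P : Fin 2 → Finset (Fin m)} {g : Fin m}
    (hP : ∀ x y, envies c P x y ↔ envies c' P x y)
    (hQ : ∀ x y, envies c (give c P g) x y ↔ envies c' (give c P g) x y) :
    step c P g = step c' P g := by
  have hr : receiver c P = receiver c' P := if_congr (hP 1 0) rfl rfl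
  have hgive : give c P g = give c' P g := by rw [give, give, hr]
  unfold step swapIfMutual
  rw [← hgive]
  exact if_congr (and_congr (hQ 0 1) (hQ 1 0)) rfl rfl

lemma run_succ {s : ℕ} (hs : s < m) : run c (s + 1) = step c (run c s) ⟨s, hs⟩ :=
  dif_pos hs

lemma run_succ_of_le {s : ℕ} (hs : m ≤ s) : run c (s + 1) = run c s :=
  dif_neg hs.not_gt

lemma not_mutualEnvy_swapIfMutual (Q : Fin 2 → Finset (Fin m)) :
    ¬ MutualEnvy c (swapIfMutual c Q) := by
  unfold swapIfMutual
  split_ifs with hQ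
  · rintro ⟨h01, -⟩
    exact hQ.1.not_gt h01
  · exact hQ

lemma not_mutualEnvy_run (s : ℕ) : ¬ MutualEnvy c (run c s) := by
  induction s with
  | zero => exact fun h => lt_irrefl _ h.1
  | succ s ih =>
    rw [run]
    split_ifs
    · exact not_mutualEnvy_swapIfMutual _
    · exact ih

lemma step_union (P : Fin 2 → Finset (Fin m)) (g : Fin m) :
    step c P g 0 ∪ step c P g 1 = insert g (P 0 ∪ P 1) := by
  have hgive : give c P g 0 ∪ give c P g 1 = insert g (P 0 ∪ P 1) := by
    unfold give
    generalize receiver c P = r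
    fin_cases r <;> simp [insert_union, union_insert]
  unfold step swapIfMutual
  split_ifs
  · rw [← hgive]
    exact union_comm _ _
  · exact hgive

lemma run_union (s : ℕ) :
    run c s 0 ∪ run c s 1 = univ.filter fun g : Fin m => (g : ℕ) < s := by
  induction s with
  | zero => simp [run]
  | succ s ih =>
    rw [run]
    split_ifs with hs
    · rw [step_union, ih]
      ext x
      simp only [mem_insert, mem_filter, mem_univ, true_and, Fin.ext_iff]
      omega
    · rw [ih]
      ext x
      simp only [mem_filter, mem_univ, true_and]
      omega

lemma lt_of_mem_run {s : ℕ} {a : Fin 2} {g : Fin m} (h : g ∈ run c s a) : (g : ℕ) < s := by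
  have : g ∈ run c s 0 ∪ run c s 1 := by fin_cases a <;> simp_all
  simpa [run_union] using this

lemma notMem_run_of_le {s : ℕ} {a : Fin 2} {g : Fin m} (h : s ≤ g) : g ∉ run c s a :=
  fun hg => (lt_of_mem_run hg).not_ge h

lemma step_disjoint {P : Fin 2 → Finset (Fin m)} {g : Fin m} (hP : Disjoint (P 0) (P 1))
    (hg : g ∉ P 0 ∪ P 1) : Disjoint (step c P g 0) (step c P g 1) := by
  have hgive : Disjoint (give c P g 0) (give c P g 1) := by
    unfold give
    generalize receiver c P = r
    rw [mem_union, not_or] at hg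
    fin_cases r <;> simp [hP, hg]
  unfold step swapIfMutual
  split_ifs
  · exact hgive.symm
  · exact hgive

lemma run_disjoint (s : ℕ) (i : Fin 2) : Disjoint (run c s i) (run c s (i + 1)) := by
  suffices h : Disjoint (run c s 0) (run c s 1) by
    fin_cases i
    · exact h
    · exact h.symm
  induction s with
  | zero => simp [run]
  | succ s ih =>
    rw [run]
    split_ifs with hs
    · exact step_disjoint ih fun h => by simp [run_union] at h
    · exact ih

lemma run_eq_compl (i : Fin 2) : run c m i = univ \ run c m (i + 1) := by
  have hcover : run c m i ∪ run c m (i + 1) = univ := by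
    rw [Fin.two_union_add_one, run_union]
    simp
  rw [← hcover, union_sdiff_right, sdiff_eq_self_of_disjoint (run_disjoint m i)]

lemma disjoint_insert_run {s : ℕ} (hs : s < m) (i : Fin 2) :
    Disjoint (insert ⟨s, hs⟩ (run c s i)) (run c s (i + 1)) :=
  disjoint_insert_left.2 ⟨notMem_run_of_le le_rfl, run_disjoint s i⟩

lemma disjoint_run_insert {s : ℕ} (hs : s < m) (i : Fin 2) :
    Disjoint (run c s i) (insert ⟨s, hs⟩ (run c s (i + 1))) :=
  disjoint_insert_right.2 ⟨notMem_run_of_le le_rfl, run_disjoint s i⟩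

lemma step_cases (P : Fin 2 → Finset (Fin m)) (g : Fin m) (i : Fin 2) :
    (receiver c P = i ∧ step c P g i = insert g (P i) ∧ step c P g (i + 1) = P (i + 1)) ∨
    (receiver c P = i ∧ step c P g i = P (i + 1) ∧ step c P g (i + 1) = insert g (P i) ∧
      bval (c i) (insert g (P i)) < bval (c i) (P (i + 1)) ∧
      bval (c (i + 1)) (P (i + 1)) < bval (c (i + 1)) (insert g (P i))) ∨
    (receiver c P = i + 1 ∧ step c P g i = P i ∧
      step c P g (i + 1) = insert g (P (i + 1))) ∨
    (receiver c P = i + 1 ∧ step c P g i = insert g (P (i + 1)) ∧ step c P g (i + 1) = P i ∧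
      bval (c i) (P i) < bval (c i) (insert g (P (i + 1))) ∧
      bval (c (i + 1)) (insert g (P (i + 1))) < bval (c (i + 1)) (P i)) := by
  set Q := give c P g
  have hstep : step c P g = if MutualEnvy c Q then fun a => Q (a + 1) else Q := rfl
  have hQr : Q (receiver c P) = insert g (P (receiver c P)) := Function.update_self ..
  have hQo : Q (receiver c P + 1) = P (receiver c P + 1) :=
    Function.update_of_ne (Fin.two_add_one_ne _) ..
  rcases Fin.two_eq_or_eq_add_one i (receiver c P) with hr | hr <;> rw [hr] at hQr hQo
  · by_cases hmut : MutualEnvy c Q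
    · obtain ⟨henvy, henvy'⟩ := (mutualEnvy_iff i).1 hmut
      rw [envies, hQr, hQo] at henvy henvy'
      refine Or.inr (Or.inl ⟨hr, ?_, ?_, henvy, henvy'⟩) <;>
        simp only [hstep, if_pos hmut, Fin.two_add_one_add_one, hQr, hQo]
    · exact Or.inl ⟨hr, by simp only [hstep, if_neg hmut, hQr, hQo, and_self]⟩
  · rw [Fin.two_add_one_add_one] at hQo
    by_cases hmut : MutualEnvy c Q
    · obtain ⟨henvy, henvy'⟩ := (mutualEnvy_iff i).1 hmut
      rw [envies, hQr, hQo] at henvy henvy'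
      refine Or.inr (Or.inr (Or.inr ⟨hr, ?_, ?_, henvy, henvy'⟩)) <;>
        simp only [hstep, if_pos hmut, Fin.two_add_one_add_one, hQr, hQo]
    · refine Or.inr (Or.inr (Or.inl ⟨hr, ?_⟩))
      simp only [hstep, if_neg hmut, hQr, hQo, and_self]

end TwoAgents

section Reduction

variable {c : Fin 2 → Bid m}

lemma mem_sources_iff {P : Fin 2 → Finset (Fin m)} {a : Fin 2} :
    a ∈ sources c P ↔ ¬ envies c P (a + 1) a := by
  fin_cases a <;> simp [sources, Fin.forall_fin_two, not_envies_self]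

lemma sources_eq_empty_of_mutualEnvy {P : Fin 2 → Finset (Fin m)} (hP : MutualEnvy c P) :
    sources c P = ∅ := by
  ext a
  simp only [mem_sources_iff, notMem_empty, iff_false, not_not]
  exact ((mutualEnvy_iff a).1 hP).2

lemma receiver_mem_sources {P : Fin 2 → Finset (Fin m)} (hP : ¬ MutualEnvy c P) :
    receiver c P ∈ sources c P := by
  rw [mem_sources_iff]
  unfold receiver
  split_ifs with h
  · exact fun h' => hP ⟨h', h⟩
  · exact h

lemma stdAgent_eq_receiver {P : Fin 2 → Finset (Fin m)} (hP : ¬ MutualEnvy c P) :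
    stdAgent c P = some (receiver c P) := by
  have hmem := receiver_mem_sources hP
  rw [stdAgent, dif_pos ⟨_, hmem⟩, Option.some_inj]
  refine le_antisymm (min'_le _ _ hmem) (le_min' _ _ _ fun a ha => ?_)
  rw [mem_sources_iff] at ha
  unfold receiver
  split_ifs with h
  · fin_cases a
    · exact absurd h ha
    · exact le_rfl
  · exact Fin.zero_le a

lemma elimOnce_of_mutualEnvy {P : Fin 2 → Finset (Fin m)} (hP : MutualEnvy c P) :
    elimOnce c P = fun a => P (a + 1) := by
  have hcyc : cycleSet c P = {Equiv.swap 0 1} := by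
    ext σ
    simp only [cycleSet, mem_filter, mem_univ, true_and, mem_singleton]
    refine ⟨fun ⟨hσ, _⟩ => (σ.fin_two_eq_one_or_swap).resolve_left ?_, ?_⟩
    · rintro rfl
      exact Equiv.Perm.not_isCycle_one hσ
    · rintro rfl
      refine ⟨Equiv.Perm.isCycle_swap (by decide), fun a _ => ?_⟩
      have hswap : Equiv.swap (0 : Fin 2) 1 a = a + 1 := by revert a; decide
      rw [hswap]
      exact ((mutualEnvy_iff a).1 hP).1
  rw [elimOnce, dif_pos (by rw [hcyc]; exact singleton_nonempty _)]
  simp only [hcyc, image_singleton, min'_singleton, Equiv.symm_apply_apply]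
  funext a
  congr 1
  revert a; decide

lemma resolve_eq_swapIfMutual (P : Fin 2 → Finset (Fin m)) :
    resolve c (2 * 2 + 1) P = swapIfMutual c P := by
  have hstop : ∀ fuel (Q : Fin 2 → Finset (Fin m)), ¬ MutualEnvy c Q →
      resolve c (fuel + 1) Q = Q :=
    fun fuel Q hQ => by rw [resolve, if_pos ⟨_, receiver_mem_sources hQ⟩]
  unfold swapIfMutual
  split_ifs with hP
  · rw [resolve, if_neg (by simp [sources_eq_empty_of_mutualEnvy hP]),
      elimOnce_of_mutualEnvy hP, hstop]
    simpa [swapIfMutual, hP] using not_mutualEnvy_swapIfMutual (c := c) P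
  · exact hstop _ _ hP

lemma stateECE_stdAgent (k : ℕ) :
    stateECE c (stdAgent c) (fun _ R hR => R.min' hR) k =
      (run c k, univ.filter fun g : Fin m => k ≤ (g : ℕ)) := by
  induction k with
  | zero => simp [stateECE, run]
  | succ k ih =>
    rw [stateECE, ih]
    by_cases hk : k < m
    · have hne : (univ.filter fun g : Fin m => k ≤ (g : ℕ)).Nonempty :=
        ⟨⟨k, hk⟩, by simp⟩
      have hmin : (univ.filter fun g : Fin m => k ≤ (g : ℕ)).min' hne = ⟨k, hk⟩ :=
        le_antisymm (min'_le _ _ (by simp)) (le_min' _ _ _ fun x hx => by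
          rw [Fin.le_def]; simpa using hx)
      simp only [dif_pos hne, stdAgent_eq_receiver (not_mutualEnvy_run k), hmin]
      refine Prod.ext ?_ ?_
      · show resolve c (2 * 2 + 1) _ = _
        rw [resolve_eq_swapIfMutual, run_succ hk, step, give]
        congr 1
        funext j
        rw [Function.update_apply]
        split_ifs with hj
        · rw [hj]
        · rfl
      · ext x
        simp only [mem_erase, mem_filter, mem_univ, true_and, Ne, Fin.ext_iff]
        omega
    · have hemp : (univ.filter fun g : Fin m => k ≤ (g : ℕ)) = ∅ := by
        ext x
        simp only [mem_filter, mem_univ, true_and, notMem_empty, iff_false, not_le]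
        omega
      rw [dif_neg (by rw [hemp]; exact not_nonempty_empty), run_succ_of_le (not_lt.1 hk), hemp]
      congr 1
      ext x
      simp only [mem_filter, mem_univ, true_and, notMem_empty, false_iff, not_le]
      omega

lemma standard_eq_run (c : Fin 2 → Bid m) : Standard c = run c m := by
  rw [Standard, stateECE_stdAgent]

end Reduction

section Boost

-- The bonus `bval β univ + 1` exceeds the reported value of every bundle.
noncomputable def boost (β : Bid m) (γ : Fin m) : Bid m where
  val g := β.val g + if g = γ then bval β univ + 1 else 0
  nonneg g := add_nonneg (β.nonneg g) (by split_ifs <;> linarith [bval_nonneg β univ])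
  pref := β.pref

lemma bval_boost (β : Bid m) (γ : Fin m) (S : Finset (Fin m)) :
    bval (boost β γ) S = bval β S + if γ ∈ S then bval β univ + 1 else 0 := by
  simp only [bval, boost, sum_add_distrib, sum_ite_eq']

lemma bval_boost_of_notMem {β : Bid m} {γ : Fin m} {S : Finset (Fin m)} (hS : γ ∉ S) :
    bval (boost β γ) S = bval β S := by
  rw [bval_boost, if_neg hS, add_zero]

lemma bval_boost_lt {β : Bid m} {γ : Fin m} {S T : Finset (Fin m)} (hS : γ ∈ S)
    (hT : γ ∉ T) :
    bval (boost β γ) T < bval (boost β γ) S := by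
  rw [bval_boost, bval_boost, if_pos hS, if_neg hT]
  linarith [bval_mono β (subset_univ T), bval_nonneg β S]

noncomputable def boostAt (b : Fin 2 → Bid m) (i : Fin 2) (γ : Fin m) : Fin 2 → Bid m :=
  Function.update b i (boost (b i) γ)

variable {b : Fin 2 → Bid m} {i : Fin 2} {γ : Fin m}

lemma boostAt_add_one : boostAt b i γ (i + 1) = b (i + 1) :=
  Function.update_of_ne (Fin.two_add_one_ne i) ..

lemma envies_boostAt_iff {P : Fin 2 → Finset (Fin m)} (hP : ∀ a, γ ∉ P a) (x y : Fin 2) :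
    envies (boostAt b i γ) P x y ↔ envies b P x y := by
  unfold envies boostAt
  rcases eq_or_ne x i with rfl | hx
  · rw [Function.update_self, bval_boost_of_notMem (hP x), bval_boost_of_notMem (hP y)]
  · rw [Function.update_of_ne hx]

lemma envies_boostAt {P : Fin 2 → Finset (Fin m)} (hi : γ ∉ P i) (ho : γ ∈ P (i + 1)) :
    envies (boostAt b i γ) P i (i + 1) := by
  unfold envies boostAt
  rw [Function.update_self]
  exact bval_boost_lt ho hi

lemma boostAt_self : boostAt b i γ i = boost (b i) γ := Function.update_self ..

lemma run_boostAt_of_le {s : ℕ} (hs : s ≤ γ) : run (boostAt b i γ) s = run b s := by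
  induction s with
  | zero => rfl
  | succ s ih =>
    have hsγ : s < γ := hs
    by_cases hsm : s < m
    · rw [run_succ hsm, run_succ hsm, ih hsγ.le]
      have hP : ∀ a, γ ∉ run b s a := fun a => notMem_run_of_le hsγ.le
      have hQ : ∀ a, γ ∉ give b (run b s) ⟨s, hsm⟩ a := fun a hγ => by
        rcases mem_insert.1 (give_subset _ _ a hγ) with h | h
        · exact hsγ.ne (congrArg Fin.val h).symm
        · exact hP a h
      exact (step_congr (fun x y => (envies_boostAt_iff hP x y).symm)
        (fun x y => (envies_boostAt_iff hQ x y).symm)).symm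
    · rw [run_succ_of_le (not_lt.1 hsm), run_succ_of_le (not_lt.1 hsm), ih hsγ.le]

lemma run_boostAt_subset {s s' : ℕ} (hγ : γ ∈ run (boostAt b i γ) s i) (hss : s ≤ s') :
    run (boostAt b i γ) s i ⊆ run (boostAt b i γ) s' i := by
  induction s', hss using Nat.le_induction with
  | base => exact subset_rfl
  | succ s' hss ih =>
    refine ih.trans ?_
    set P := run (boostAt b i γ) s'
    have hi : γ ∈ P i := ih hγ
    have ho : γ ∉ P (i + 1) := disjoint_left.1 (run_disjoint s' i) hi
    by_cases hsm : s' < m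
    · have hg : (⟨s', hsm⟩ : Fin m) ≠ γ := Fin.ne_of_val_ne (lt_of_mem_run hi).ne'
      rw [run_succ hsm]
      rcases step_cases P ⟨s', hsm⟩ i with
        ⟨-, h, -⟩ | ⟨-, -, -, henvy, -⟩ | ⟨-, h, -⟩ | ⟨-, -, -, henvy, -⟩
      · rw [h]
        exact subset_insert _ _
      · rw [boostAt_self] at henvy
        exact absurd henvy (bval_boost_lt (mem_insert_of_mem hi) ho).asymm
      · rw [h]
      · rw [boostAt_self] at henvy
        exact absurd henvy (bval_boost_lt hi (by simp [hg.symm, ho])).asymm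
    · rw [run_succ_of_le (not_lt.1 hsm)]

-- While the other agent holds `D ∋ γ`, the boosted agent envies her and so is the receiver.
lemma run_boostAt_chase {D : Finset (Fin m)} (hγD : γ ∈ D) {t s : ℕ} (hts : t ≤ s)
    (h : D ⊆ run (boostAt b i γ) t i ∨ run (boostAt b i γ) t (i + 1) = D) :
    D ⊆ run (boostAt b i γ) s i ∨ run (boostAt b i γ) s (i + 1) = D := by
  induction s, hts using Nat.le_induction with
  | base => exact h
  | succ s hts ih =>
    rcases ih with hsub | hD
    · exact Or.inl (hsub.trans (run_boostAt_subset (hsub hγD) s.le_succ))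
    by_cases hsm : s < m
    · set P := run (boostAt b i γ) s
      have ho : γ ∈ P (i + 1) := hD ▸ hγD
      have hi : γ ∉ P i := disjoint_right.1 (run_disjoint s i) ho
      have hr : receiver (boostAt b i γ) P = i :=
        receiver_eq_of_envies (not_mutualEnvy_run s) (envies_boostAt hi ho)
      rw [run_succ hsm]
      rcases step_cases P ⟨s, hsm⟩ i with
        ⟨-, -, h⟩ | ⟨-, h, -⟩ | ⟨hr', -⟩ | ⟨hr', -⟩
      · exact Or.inr (h.trans hD)
      · exact Or.inl (h.trans hD).ge
      · exact absurd (hr.symm.trans hr') (Fin.two_add_one_ne i).symm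
      · exact absurd (hr.symm.trans hr') (Fin.two_add_one_ne i).symm
    · rw [run_succ_of_le (not_lt.1 hsm)]
      exact Or.inr hD

lemma run_boostAt_succ : run (boostAt b i γ) (γ + 1) = step (boostAt b i γ) (run b γ) γ := by
  rw [run_succ γ.isLt, run_boostAt_of_le le_rfl]

lemma receiver_boostAt : receiver (boostAt b i γ) (run b γ) = receiver b (run b γ) :=
  if_congr (envies_boostAt_iff (fun _ => notMem_run_of_le le_rfl) 1 0) rfl rfl

lemma insert_subset_run_boostAt (hr : receiver b (run b γ) = i) :
    insert γ (run b γ i) ⊆ run (boostAt b i γ) m i := by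
  have hr' := (receiver_boostAt (i := i)).trans hr
  have hnext : run (boostAt b i γ) (γ + 1) i = insert γ (run b γ i) := by
    rw [run_boostAt_succ]
    rcases step_cases (run b γ) γ i with
      ⟨-, h, -⟩ | ⟨-, -, -, henvy, -⟩ | ⟨hr'', -⟩ | ⟨hr'', -⟩
    · exact h
    · rw [boostAt_self] at henvy
      exact absurd henvy (bval_boost_lt (mem_insert_self _ _) (notMem_run_of_le le_rfl)).asymm
    · exact absurd (hr'.symm.trans hr'') (Fin.two_add_one_ne i).symm
    · exact absurd (hr'.symm.trans hr'') (Fin.two_add_one_ne i).symm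
  rw [← hnext]
  exact run_boostAt_subset (hnext ▸ mem_insert_self _ _) γ.isLt

lemma run_boostAt_of_receiver_eq_add_one (hr : receiver b (run b γ) = i + 1) :
    insert γ (run b γ (i + 1)) ⊆ run (boostAt b i γ) m i ∨
      (run (boostAt b i γ) m i = univ \ insert γ (run b γ (i + 1)) ∧
        bval (b (i + 1)) (univ \ insert γ (run b γ (i + 1))) ≤
          bval (b (i + 1)) (insert γ (run b γ (i + 1)))) := by
  set D := insert γ (run b γ (i + 1))
  have hr' := (receiver_boostAt (i := i)).trans hr
  have hnext :
      D ⊆ run (boostAt b i γ) (γ + 1) i ∨ run (boostAt b i γ) (γ + 1) (i + 1) = D := by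
    rw [run_boostAt_succ]
    rcases step_cases (run b γ) γ i with
      ⟨hr'', -⟩ | ⟨hr'', -⟩ | ⟨-, -, h⟩ | ⟨-, h, -⟩
    · exact absurd (hr''.symm.trans hr') (Fin.two_add_one_ne i).symm
    · exact absurd (hr''.symm.trans hr') (Fin.two_add_one_ne i).symm
    · exact Or.inr h
    · exact Or.inl h.ge
  rcases run_boostAt_chase (mem_insert_self _ _) γ.isLt hnext with hsub | hD
  · exact Or.inl hsub
  have hcompl : run (boostAt b i γ) m i = univ \ D := by rw [run_eq_compl, hD]
  have henvy : envies (boostAt b i γ) (run (boostAt b i γ) m) i (i + 1) :=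
    envies_boostAt (by simp [hcompl, D]) (hD ▸ mem_insert_self _ _)
  have hcontent : ¬ envies (boostAt b i γ) (run (boostAt b i γ) m) (i + 1) i :=
    fun h => not_mutualEnvy_run m ((mutualEnvy_iff i).2 ⟨henvy, h⟩)
  rw [envies, boostAt_add_one, hD, hcompl, not_lt] at hcontent
  exact Or.inr ⟨hcompl, hcontent⟩

end Boost

section BestResponse

variable {b : Fin 2 → Bid m} {i : Fin 2} {v : Fin m → ℝ}

lemma value_run_boostAt_le (hbr : BestResponse Standard v b i) (γ : Fin m) :
    value v (run (boostAt b i γ) m i) ≤ value v (run b m i) := by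
  have h := hbr (boost (b i) γ)
  rw [standard_eq_run, standard_eq_run] at h
  exact h

lemma value_insert_run_le_of_receiver_eq (hv : ∀ g, 0 ≤ v g)
    (hbr : BestResponse Standard v b i) {γ : Fin m} (hr : receiver b (run b γ) = i) :
    value v (insert γ (run b γ i)) ≤ value v (run b m i) :=
  (value_mono hv (insert_subset_run_boostAt hr)).trans (value_run_boostAt_le hbr _)

lemma value_insert_run_le_of_receiver_eq_add_one (hv : ∀ g, 0 ≤ v g)
    (hbr : BestResponse Standard v b i) {γ : Fin m} (hr : receiver b (run b γ) = i + 1) :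
    value v (insert γ (run b γ (i + 1))) ≤ value v (run b m i) ∨
      (bval (b (i + 1)) (univ \ insert γ (run b γ (i + 1))) ≤
          bval (b (i + 1)) (insert γ (run b γ (i + 1))) ∧
        value v (univ \ insert γ (run b γ (i + 1))) ≤ value v (run b m i)) := by
  rcases run_boostAt_of_receiver_eq_add_one hr with hsub | ⟨hcompl, hcontent⟩
  · exact Or.inl ((value_mono hv hsub).trans (value_run_boostAt_le hbr _))
  · exact Or.inr ⟨hcontent, hcompl ▸ value_run_boostAt_le hbr _⟩

-- The second alternative excludes the swap that would hand agent `i` the other bundle.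
lemma value_run_le (hv : ∀ g, 0 ≤ v g) (hbr : BestResponse Standard v b i) (s : ℕ) :
    value v (run b s i) ≤ value v (run b m i) ∧
      (value v (run b s (i + 1)) ≤ value v (run b m i) ∨
        bval (b (i + 1)) (univ \ run b s (i + 1)) ≤ bval (b (i + 1)) (run b s (i + 1))) := by
  induction s with
  | zero =>
    have h0 : value v ∅ ≤ value v (run b m i) := value_nonneg hv _
    exact ⟨h0, Or.inl h0⟩
  | succ s ih =>
    rcases lt_or_ge s m with hs | hs
    swap
    · rwa [run_succ_of_le hs]
    have hF := value_insert_run_le_of_receiver_eq hv hbr (γ := ⟨s, hs⟩)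
    have hSG := value_insert_run_le_of_receiver_eq_add_one hv hbr (γ := ⟨s, hs⟩)
    rw [run_succ hs]
    rcases step_cases (run b s) ⟨s, hs⟩ i with
      ⟨hr, h1, h2⟩ | ⟨hr, h1, h2, -, hswap⟩ | ⟨hr, h1, h2⟩ | ⟨hr, h1, h2, -, hswap⟩ <;>
      rw [h1, h2]
    · exact ⟨hF hr, ih.2⟩
    · refine ⟨ih.2.resolve_right fun hcontent => ?_, Or.inl (hF hr)⟩
      linarith [bval_le_bval_compl (b (i + 1)) (disjoint_insert_run (c := b) hs i)]
    · exact ⟨ih.1, (hSG hr).imp_right And.left⟩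
    · refine ⟨(hSG hr).resolve_right fun ⟨hcontent, _⟩ => ?_, Or.inl ih.1⟩
      linarith [bval_le_bval_compl (b (i + 1)) (disjoint_run_insert (c := b) hs i)]

lemma value_erase_sdiff_run_pos (hv : ∀ g, 0 ≤ v g) (hbr : BestResponse Standard v b i)
    (hY : ∀ g, value v (run b m i) < value v ((run b m (i + 1)).erase g)) (s : ℕ) :
    run b s (i + 1) ⊆ run b m (i + 1) →
      ∀ g, 0 < value v ((run b m (i + 1) \ run b s (i + 1)).erase g) := by
  set Y := run b m (i + 1)
  induction s with
  | zero => exact fun _ => value_erase_sdiff_pos hv hY (value_nonneg hv _)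
  | succ s ih =>
    rcases lt_or_ge s m with hs | hs
    swap
    · rwa [run_succ_of_le hs]
    have hF := value_insert_run_le_of_receiver_eq hv hbr (γ := ⟨s, hs⟩)
    have hSG := value_insert_run_le_of_receiver_eq_add_one hv hbr (γ := ⟨s, hs⟩)
    rw [run_succ hs]
    rcases step_cases (run b s) ⟨s, hs⟩ i with
      ⟨-, -, h⟩ | ⟨hr, -, h, -⟩ | ⟨hr, -, h⟩ | ⟨-, -, h, -⟩ <;> rw [h]
    · exact ih
    · exact fun _ => value_erase_sdiff_pos hv hY (hF hr)
    · intro hsub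
      rcases hSG hr with hD | ⟨-, hgrab⟩
      · exact value_erase_sdiff_pos hv hY hD
      have hsplit : value v (univ \ insert ⟨s, hs⟩ (run b s (i + 1))) =
          value v (run b m i) + value v (Y \ insert ⟨s, hs⟩ (run b s (i + 1))) := by
        rw [run_eq_compl]
        exact value_compl_eq_add v hsub
      have hpos := ih ((subset_insert _ _).trans hsub) ⟨s, hs⟩
      rw [← sdiff_insert] at hpos
      linarith
    · exact fun _ => value_erase_sdiff_pos hv hY (value_run_le hv hbr s).1

end BestResponse

end ECE

/-- For any instance with exactly 2 agents whose true valuations are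
additive, and any bid profile in which agent `i`'s bid is a best response to the other
agent's bid, the allocation produced by Standard-E-C-E is EF1 from agent `i`'s
perspective with respect to agent `i`'s true valuation. -/
theorem standard_two_best_response_EF1 {m : ℕ} (v : Fin 2 → Fin m → ℝ)
    (hv : ∀ i g, 0 ≤ v i g) (b : Fin 2 → Bid m) (i : Fin 2)
    (hbr : BestResponse Standard (v i) b i) :
    EF1From 1 (v i) (Standard b) i := by
  rw [standard_eq_run]
  intro j ⟨g₀, hg₀⟩
  rcases Fin.two_eq_or_eq_add_one i j with rfl | rfl
  · exact ⟨g₀, hg₀, by rw [one_mul]; exact value_mono (hv j) (erase_subset _ _)⟩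
  by_contra! hno
  simp only [one_mul] at hno
  have hY : ∀ g, value (v i) (run b m i) < value (v i) ((run b m (i + 1)).erase g) := by
    intro g
    by_cases hg : g ∈ run b m (i + 1)
    · exact hno g hg
    · rw [erase_eq_of_notMem hg]
      exact (hno g₀ hg₀).trans_le (value_mono (hv i) (erase_subset _ _))
  have hfinal := value_erase_sdiff_run_pos (hv i) hbr hY m subset_rfl g₀
  simp [value] at hfinal
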